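/- For the Vasyunin automorphism F = Id + H on ℚ⁵, all monomials appearing (after full reduction) in the components (F^k)_2, (F^k)_3 and (F^k)_5 of every compositional iterate F^k (k ≥ 1) have strictly positive rational coefficients. -/
import Mathlib


open MvPolynomial Finset

/-- Composition `P ∘ F` of polynomial maps of `K^n`. -/
noncomputable def PolyMap.comp {K : Type*} [CommRing K] {n : ℕ}
    (P F : Fin n → MvPolynomial (Fin n) K) : Fin n → MvPolynomial (Fin n) K :=
  fun i => bind₁ F (P i)

/-- The identity polynomial map. -/
noncomputable def PolyMap.id (K : Type*) [CommRing K] (n : ℕ) :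
    Fin n → MvPolynomial (Fin n) K :=
  fun i => X i

/-- The Pascal difference operator `Δ_F P = P ∘ F − P`. -/
noncomputable def Δ {K : Type*} [CommRing K] {n : ℕ}
    (F P : Fin n → MvPolynomial (Fin n) K) : Fin n → MvPolynomial (Fin n) K :=
  fun i => bind₁ F (P i) - P i

/-- `F` is Pascal finite if some iterate of `Δ_F` kills the identity map. -/
def IsPascalFinite {K : Type*} [CommRing K] {n : ℕ}
    (F : Fin n → MvPolynomial (Fin n) K) : Prop :=
  ∃ m : ℕ, 0 < m ∧ (Δ F)^[m] (PolyMap.id K n) = 0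

/-- Compositional powers of a polynomial map. -/
noncomputable def PolyMap.pow {K : Type*} [CommRing K] {n : ℕ}
    (F : Fin n → MvPolynomial (Fin n) K) : ℕ → (Fin n → MvPolynomial (Fin n) K)
  | 0 => PolyMap.id K n
  | (l + 1) => PolyMap.comp (PolyMap.pow F l) F

/-- The Vasyunin map `H = (0, X₁X₃, X₁X₄ + ½X₂², X₁X₅ − X₂X₃, ½X₃²)` on `ℚ⁵`. -/
noncomputable def VasyuninH : Fin 5 → MvPolynomial (Fin 5) ℚ :=
  ![0, X 0 * X 2, X 0 * X 3 + C (1/2 : ℚ) * (X 1) ^ 2,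
    X 0 * X 4 - X 1 * X 2, C (1/2 : ℚ) * (X 2) ^ 2]

/- ## Auxiliary material -/

/-- A polynomial has nonnegative coefficients. -/
def NNCoeff (p : MvPolynomial (Fin 5) ℚ) : Prop := ∀ d, 0 ≤ coeff d p

lemma NNCoeff.add {p q} (hp : NNCoeff p) (hq : NNCoeff q) : NNCoeff (p + q) :=
  fun d => by rw [coeff_add]; exact add_nonneg (hp d) (hq d)

lemma NNCoeff.mul {p q} (hp : NNCoeff p) (hq : NNCoeff q) : NNCoeff (p * q) := by
  intro d
  rw [coeff_mul]
  exact Finset.sum_nonneg fun x _ => mul_nonneg (hp _) (hq _)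

lemma NNCoeff.X (i : Fin 5) : NNCoeff (X i) := by
  classical
  intro d
  rw [coeff_X']
  split <;> norm_num

lemma NNCoeff.C {c : ℚ} (hc : 0 ≤ c) : NNCoeff (MvPolynomial.C c) := by
  classical
  intro d
  rw [coeff_C]
  split
  · exact hc
  · exact le_refl 0

lemma NNCoeff.pow {p} (hp : NNCoeff p) (n : ℕ) : NNCoeff (p ^ n) := by
  induction n with
  | zero => simpa using NNCoeff.C (zero_le_one (α := ℚ))
  | succ n ih => rw [pow_succ]; exact ih.mul hp

lemma PolyMap.comp_assoc (P Q R : Fin 5 → MvPolynomial (Fin 5) ℚ) :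
    PolyMap.comp (PolyMap.comp P Q) R = PolyMap.comp P (PolyMap.comp Q R) := by
  funext i
  simp only [PolyMap.comp, bind₁_bind₁]
  rfl

lemma PolyMap.comp_id (P : Fin 5 → MvPolynomial (Fin 5) ℚ) :
    PolyMap.comp P (PolyMap.id ℚ 5) = P := by
  funext i
  show bind₁ MvPolynomial.X (P i) = P i
  rw [bind₁_X_left]
  rfl

lemma PolyMap.id_comp (P : Fin 5 → MvPolynomial (Fin 5) ℚ) :
    PolyMap.comp (PolyMap.id ℚ 5) P = P := by
  funext i
  show bind₁ P (MvPolynomial.X i) = P i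
  rw [bind₁_X_right]

lemma PolyMap.pow_succ_left (F : Fin 5 → MvPolynomial (Fin 5) ℚ) (k : ℕ) :
    PolyMap.pow F (k + 1) = PolyMap.comp F (PolyMap.pow F k) := by
  induction k with
  | zero =>
    show PolyMap.comp (PolyMap.pow F 0) F = PolyMap.comp F (PolyMap.pow F 0)
    show PolyMap.comp (PolyMap.id ℚ 5) F = PolyMap.comp F (PolyMap.id ℚ 5)
    rw [PolyMap.comp_id, PolyMap.id_comp]
  | succ k ih =>
    show PolyMap.comp (PolyMap.pow F (k + 1)) F = _
    conv_lhs => rw [ih]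
    rw [PolyMap.comp_assoc]
    rfl

lemma PolyMap.pow_one' (F : Fin 5 → MvPolynomial (Fin 5) ℚ) (i : Fin 5) :
    PolyMap.pow F 1 i = F i := by
  show PolyMap.comp (PolyMap.id ℚ 5) F i = F i
  rw [PolyMap.id_comp]

section Vas

variable {F : Fin 5 → MvPolynomial (Fin 5) ℚ} (hF : F = fun i => X i + VasyuninH i)

lemma recG (k : ℕ) (i : Fin 5) :
    PolyMap.pow F (k + 1) i = bind₁ (PolyMap.pow F k) (F i) := by
  rw [PolyMap.pow_succ_left]; rfl

include hF

lemma hFval0 : F 0 = X 0 := by rw [hF]; simp [VasyuninH]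
lemma hFval1 : F 1 = X 1 + X 0 * X 2 := by rw [hF]; simp [VasyuninH]
lemma hFval2 : F 2 = X 2 + (X 0 * X 3 + C (1/2 : ℚ) * (X 1) ^ 2) := by
  rw [hF]; simp [VasyuninH]
lemma hFval3 : F 3 = X 3 + (X 0 * X 4 - X 1 * X 2) := by rw [hF]; simp [VasyuninH]
lemma hFval4 : F 4 = X 4 + C (1/2 : ℚ) * (X 2) ^ 2 := by rw [hF]; simp [VasyuninH]

lemma hG0 (k : ℕ) : PolyMap.pow F k 0 = X 0 := by
  induction k with
  | zero => rfl
  | succ k ih =>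
    rw [recG, hFval0 hF]
    simpa using ih

lemma recA (k : ℕ) :
    PolyMap.pow F (k + 1) 1 = PolyMap.pow F k 1 + X 0 * PolyMap.pow F k 2 := by
  rw [recG, hFval1 hF]
  simp [hG0 hF k]

lemma recC (k : ℕ) :
    PolyMap.pow F (k + 1) 3 = PolyMap.pow F k 3 +
      (X 0 * PolyMap.pow F k 4 - PolyMap.pow F k 1 * PolyMap.pow F k 2) := by
  rw [recG, hFval3 hF]
  simp only [map_add, map_sub, map_mul, bind₁_X_right, hG0 hF k]

lemma recD (k : ℕ) :
    PolyMap.pow F (k + 1) 4 = PolyMap.pow F k 4 +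
      C (1/2 : ℚ) * (PolyMap.pow F k 2) ^ 2 := by
  rw [recG, hFval4 hF]
  simp only [map_add, map_mul, map_pow, bind₁_X_right, bind₁_C_right]

end Vas

/-- The increment `E_k = X₀·(F^k)₄ + ½((F^k)₂)²` (0-indexed components 3 and 1). -/
noncomputable def Evas (F : Fin 5 → MvPolynomial (Fin 5) ℚ) (k : ℕ) :
    MvPolynomial (Fin 5) ℚ :=
  X 0 * PolyMap.pow F k 3 + C (1/2 : ℚ) * (PolyMap.pow F k 1) ^ 2

lemma htwo : (2 : MvPolynomial (Fin 5) ℚ) * C (1/2 : ℚ) = 1 := by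
  have h : (2 : MvPolynomial (Fin 5) ℚ) = C (2 : ℚ) := by rw [map_ofNat]
  rw [h, ← C_mul]
  norm_num

section Vas2

variable {F : Fin 5 → MvPolynomial (Fin 5) ℚ} (hF : F = fun i => X i + VasyuninH i)
include hF

lemma recB (k : ℕ) :
    PolyMap.pow F (k + 1) 2 = PolyMap.pow F k 2 + Evas F k := by
  rw [recG, hFval2 hF, Evas]
  simp only [map_add, map_mul, map_pow, bind₁_X_right, bind₁_C_right, hG0 hF k]

lemma recE (k : ℕ) :
    Evas F (k + 1) = Evas F k + (X 0) ^ 2 * PolyMap.pow F (k + 1) 4 := by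
  rw [Evas, Evas, recC hF k, recA hF k, recD hF k]
  linear_combination (X 0 * PolyMap.pow F k 1 * PolyMap.pow F k 2) * htwo

lemma E_one :
    Evas F 1 = X 0 * X 3 + C (1/2 : ℚ) * (X 1) ^ 2 +
      (X 0) ^ 2 * (X 4 + C (1/2 : ℚ) * (X 2) ^ 2) := by
  rw [Evas, PolyMap.pow_one', PolyMap.pow_one', hFval3 hF, hFval1 hF]
  linear_combination (X 0 * X 1 * X 2) * htwo

lemma key (k : ℕ) (hk : 1 ≤ k) :
    NNCoeff (PolyMap.pow F k 1) ∧ NNCoeff (PolyMap.pow F k 2) ∧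
      NNCoeff (PolyMap.pow F k 4) ∧ NNCoeff (Evas F k) := by
  have half : (0 : ℚ) ≤ 1/2 := by norm_num
  induction k, hk using Nat.le_induction with
  | base =>
    have h1 : PolyMap.pow F 1 1 = X 1 + X 0 * X 2 := by
      rw [PolyMap.pow_one', hFval1 hF]
    have h2 : PolyMap.pow F 1 2 = X 2 + (X 0 * X 3 + C (1/2 : ℚ) * (X 1) ^ 2) := by
      rw [PolyMap.pow_one', hFval2 hF]
    have h4 : PolyMap.pow F 1 4 = X 4 + C (1/2 : ℚ) * (X 2) ^ 2 := by
      rw [PolyMap.pow_one', hFval4 hF]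
    refine ⟨?_, ?_, ?_, ?_⟩
    · rw [h1]
      exact (NNCoeff.X 1).add ((NNCoeff.X 0).mul (NNCoeff.X 2))
    · rw [h2]
      exact (NNCoeff.X 2).add (((NNCoeff.X 0).mul (NNCoeff.X 3)).add
        ((NNCoeff.C half).mul ((NNCoeff.X 1).pow 2)))
    · rw [h4]
      exact (NNCoeff.X 4).add ((NNCoeff.C half).mul ((NNCoeff.X 2).pow 2))
    · rw [E_one hF]
      exact (((NNCoeff.X 0).mul (NNCoeff.X 3)).add
          ((NNCoeff.C half).mul ((NNCoeff.X 1).pow 2))).add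
        (((NNCoeff.X 0).pow 2).mul ((NNCoeff.X 4).add
          ((NNCoeff.C half).mul ((NNCoeff.X 2).pow 2))))
  | succ k hk ih =>
    obtain ⟨hA, hB, hD, hE⟩ := ih
    have hD' : NNCoeff (PolyMap.pow F (k + 1) 4) := by
      rw [recD hF k]
      exact hD.add ((NNCoeff.C half).mul (hB.pow 2))
    refine ⟨?_, ?_, hD', ?_⟩
    · rw [recA hF k]
      exact hA.add ((NNCoeff.X 0).mul hB)
    · rw [recB hF k]
      exact hB.add hE
    · rw [recE hF k]
      exact hE.add (((NNCoeff.X 0).pow 2).mul hD')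

end Vas2

/-- in every compositional iterate `F^k` (`k ≥ 1`) of the
Vasyunin automorphism, all monomials of the components 2, 3 and 5 (indices
`1, 2, 4` of `Fin 5`) have strictly positive coefficients. -/
theorem vasyunin_positive_coefficients
    (F : Fin 5 → MvPolynomial (Fin 5) ℚ)
    (hF : F = fun i => X i + VasyuninH i) :
    ∀ k : ℕ, 1 ≤ k → ∀ i : Fin 5, (i = 1 ∨ i = 2 ∨ i = 4) →
      ∀ d ∈ (PolyMap.pow F k i).support, 0 < coeff d (PolyMap.pow F k i) := by
  intro k hk i hi d hd
  obtain ⟨hA, hB, hD, -⟩ := key hF k hk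
  have hne : coeff d (PolyMap.pow F k i) ≠ 0 := mem_support_iff.mp hd
  have hle : 0 ≤ coeff d (PolyMap.pow F k i) := by
    rcases hi with rfl | rfl | rfl
    · exact hA d
    · exact hB d
    · exact hD d
  exact lt_of_le_of_ne hle (Ne.symm hne)
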